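/- arXiv:2301.10873 — 2 statements merged into one kernel-verified Lean document; each statement's English description precedes it below -/
import Mathlib

section
/- Suppose the data (x,u) satisfy the standing data assumptions and let δ > 0 be such that T/δ is a positive integer. Then for every L ≥ 0, Σ^δ(Q) ∩ M^L_{x,u} ⊆ Σ(Q + (1/2)δTL·I_n); that is, every pair (A,B) for which δ · Σ_{k=0}^{T/δ−1} (ẋ(kδ) − A x(kδ) − B u(kδ))(ẋ(kδ) − A x(kδ) − B u(kδ))^T ≤ Q and for which ẋ − Ax − Bu is L-square Lipschitz satisfies ∫_0^T (ẋ(t) − A x(t) − B u(t))(ẋ(t) − A x(t) − B u(t))^T dt ≤ Q + (1/2)δTL·I_n. -/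
open MeasureTheory Matrix

noncomputable def opNorm {ι κ : Type} [Fintype ι] [Fintype κ] [DecidableEq κ]
    (M : Matrix ι κ ℝ) : ℝ :=
  ‖LinearMap.toContinuousLinearMap (Matrix.toEuclideanLin M)‖

noncomputable def euclNorm {ι : Type} [Fintype ι] (v : ι → ℝ) : ℝ :=
  Real.sqrt (∑ i, v i ^ 2)

/-- `v` is `L`-square Lipschitz on `[0,T]`. -/
def SqLipschitz {ι : Type} [Fintype ι] [DecidableEq ι] (T L : ℝ) (v : ℝ → ι → ℝ) : Prop :=
  ∀ t₁ ∈ Set.Icc (0:ℝ) T, ∀ t₂ ∈ Set.Icc (0:ℝ) T,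
    opNorm (Matrix.vecMulVec (v t₁) (v t₁) - Matrix.vecMulVec (v t₂) (v t₂)) ≤ L * |t₁ - t₂|

/-- The set of all partition sums appearing in the definition of total square variation. -/
def partitionSums {ι : Type} [Fintype ι] [DecidableEq ι] (T : ℝ) (v : ℝ → ι → ℝ) : Set ℝ :=
  { s | ∃ (N : ℕ) (t : Fin (N + 1) → ℝ), Monotone t ∧ t 0 = 0 ∧ t (Fin.last N) = T ∧
      s = ∑ i : Fin N, opNorm (Matrix.vecMulVec (v (t i.succ)) (v (t i.succ)) -
            Matrix.vecMulVec (v (t i.castSucc)) (v (t i.castSucc))) }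

/-- Total square variation `V_0^T(v)`. -/
noncomputable def totalSqVar {ι : Type} [Fintype ι] [DecidableEq ι] (T : ℝ) (v : ℝ → ι → ℝ) : ℝ :=
  sSup (partitionSums T v)

/-- `V_0^T(v) ≤ c`, phrased via all partition sums. -/
def TotalSqVarLE {ι : Type} [Fintype ι] [DecidableEq ι] (T : ℝ) (v : ℝ → ι → ℝ) (c : ℝ) : Prop :=
  ∀ s ∈ partitionSums T v, s ≤ c

/-- Loewner order `M ≤ N`. -/
def loewnerLE {ι : Type} [Fintype ι] (M N : Matrix ι ι ℝ) : Prop := (N - M).PosSemidef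

/-- Strict Loewner order `M < N`. -/
def loewnerLT {ι : Type} [Fintype ι] (M N : Matrix ι ι ℝ) : Prop := (N - M).PosDef

/-- `M` is negative definite. -/
def negDefQ {ι : Type} [Fintype ι] (M : Matrix ι ι ℝ) : Prop := (-M).PosDef

/-- Entrywise Lebesgue integral of a matrix-valued function on `[0,T]`. -/
noncomputable def matIntegral {ι κ : Type} (T : ℝ) (f : ℝ → Matrix ι κ ℝ) : Matrix ι κ ℝ :=
  Matrix.of fun i j => ∫ t in Set.Ioc (0:ℝ) T, f t i j

/-- `δ • Σ_{k<N} v(kδ) v(kδ)ᵀ`. -/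
noncomputable def sampledGram {ι : Type} [Fintype ι] (δ : ℝ) (N : ℕ) (v : ℝ → ι → ℝ) :
    Matrix ι ι ℝ :=
  δ • ∑ k ∈ Finset.range N, Matrix.vecMulVec (v (k * δ)) (v (k * δ))

/-- The noise signal `ẋ − Ax − Bu` associated with a candidate system `(A,B)`. -/
def noiseSig {n m : ℕ} (xdot x : ℝ → Fin n → ℝ) (u : ℝ → Fin m → ℝ)
    (A : Matrix (Fin n) (Fin n) ℝ) (B : Matrix (Fin n) (Fin m) ℝ) : ℝ → Fin n → ℝ :=
  fun t => xdot t - A.mulVec (x t) - B.mulVec (u t)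

/-- `Σ(Q')`: systems consistent with the continuous-time data. -/
def SigmaCont {n m : ℕ} (T : ℝ) (xdot x : ℝ → Fin n → ℝ) (u : ℝ → Fin m → ℝ)
    (Q' : Matrix (Fin n) (Fin n) ℝ) :
    Set (Matrix (Fin n) (Fin n) ℝ × Matrix (Fin n) (Fin m) ℝ) :=
  { AB | loewnerLE (matIntegral T fun t =>
      Matrix.vecMulVec (noiseSig xdot x u AB.1 AB.2 t) (noiseSig xdot x u AB.1 AB.2 t)) Q' }

/-- `Σ^δ(Q')`: systems consistent with the data sampled at stepsize `δ` (with `N = T/δ` samples). -/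
def SigmaDisc {n m : ℕ} (δ : ℝ) (N : ℕ) (xdot x : ℝ → Fin n → ℝ) (u : ℝ → Fin m → ℝ)
    (Q' : Matrix (Fin n) (Fin n) ℝ) :
    Set (Matrix (Fin n) (Fin n) ℝ × Matrix (Fin n) (Fin m) ℝ) :=
  { AB | loewnerLE (sampledGram δ N (noiseSig xdot x u AB.1 AB.2)) Q' }

/-- `M^L_{x,u}`: systems whose associated noise is `L`-square Lipschitz. -/
def Mset {n m : ℕ} (T L : ℝ) (xdot x : ℝ → Fin n → ℝ) (u : ℝ → Fin m → ℝ) :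
    Set (Matrix (Fin n) (Fin n) ℝ × Matrix (Fin n) (Fin m) ℝ) :=
  { AB | SqLipschitz T L (noiseSig xdot x u AB.1 AB.2) }

/-- `N^L_{x,u}`: systems whose associated noise has total square variation at most `LT/2`. -/
def Nset {n m : ℕ} (T L : ℝ) (xdot x : ℝ → Fin n → ℝ) (u : ℝ → Fin m → ℝ) :
    Set (Matrix (Fin n) (Fin n) ℝ × Matrix (Fin n) (Fin m) ℝ) :=
  { AB | TotalSqVarLE T (noiseSig xdot x u AB.1 AB.2) (L * T / 2) }

/-- The stacked signal `ξ(t) = (ẋ(t); −x(t); −u(t))`. -/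
def xiSig {n m : ℕ} (xdot x : ℝ → Fin n → ℝ) (u : ℝ → Fin m → ℝ) (t : ℝ) :
    (Fin n ⊕ (Fin n ⊕ Fin m)) → ℝ :=
  Sum.elim (xdot t) (Sum.elim (fun i => -(x t i)) (fun j => -(u t j)))

/-- The block matrix `[[Q + βI, P, PKᵀ], [P, 0, 0], [KP, 0, 0]]`. -/
noncomputable def lmiBlock {n m : ℕ} (Q P : Matrix (Fin n) (Fin n) ℝ)
    (K : Matrix (Fin m) (Fin n) ℝ) (β : ℝ) :
    Matrix (Fin n ⊕ (Fin n ⊕ Fin m)) (Fin n ⊕ (Fin n ⊕ Fin m)) ℝ :=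
  Matrix.fromBlocks (Q + β • (1 : Matrix (Fin n) (Fin n) ℝ))
    (Matrix.of fun i jj => Sum.elim (fun j => P i j) (fun j => (P * K.transpose) i j) jj)
    (Matrix.of fun ii j => Sum.elim (fun i => P i j) (fun k => (K * P) k j) ii)
    0

/-- The continuous-data LMI. -/
def ContLMI {n m : ℕ} (T : ℝ) (xdot x : ℝ → Fin n → ℝ) (u : ℝ → Fin m → ℝ)
    (Q P : Matrix (Fin n) (Fin n) ℝ) (K : Matrix (Fin m) (Fin n) ℝ) (β : ℝ) : Prop :=
  (matIntegral T (fun t => Matrix.vecMulVec (xiSig xdot x u t) (xiSig xdot x u t)) -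
    lmiBlock Q P K β).PosSemidef

/-- The sampled-data LMI at stepsize `δ` (with `N = T/δ` samples). -/
def SampLMI {n m : ℕ} (δ : ℝ) (N : ℕ) (xdot x : ℝ → Fin n → ℝ) (u : ℝ → Fin m → ℝ)
    (Q P : Matrix (Fin n) (Fin n) ℝ) (K : Matrix (Fin m) (Fin n) ℝ) (β : ℝ) : Prop :=
  (sampledGram δ N (xiSig xdot x u) - lmiBlock Q P K β).PosSemidef

/-!
For a fixed vector `z`, the square-Lipschitz bound on `v` makes `t ↦ (v t ⬝ᵥ z) ^ 2`, the
quadratic form of `v t (v t)ᵀ` at `z`, Lipschitz with constant `L ‖z‖²`. On each sampling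
interval `[kδ, (k+1)δ]` its integral therefore exceeds the left-endpoint value
`δ (v (kδ) ⬝ᵥ z) ^ 2` by at most `L ‖z‖² δ² / 2`. Summing over the `N = T / δ` intervals gives
`∫₀ᵀ v vᵀ ≤ δ ∑ₖ v(kδ) v(kδ)ᵀ + (δ T L / 2) I` in the Loewner order, and the sampled bound
`δ ∑ₖ v(kδ) v(kδ)ᵀ ≤ Q` finishes the proof.
-/

open scoped NNReal
open Set

section OperatorNorm

variable {ι : Type} [Fintype ι] [DecidableEq ι]

lemma abs_dotProduct_mulVec_le (M : Matrix ι ι ℝ) (x y : ι → ℝ) :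
    |x ⬝ᵥ M *ᵥ y| ≤ opNorm M * ‖WithLp.toLp 2 x‖ * ‖WithLp.toLp 2 y‖ := by
  have hM : opNorm M = ‖toEuclideanCLM (𝕜 := ℝ) M‖ := rfl
  calc |x ⬝ᵥ M *ᵥ y|
      = |inner ℝ (WithLp.toLp 2 x) (toEuclideanCLM (𝕜 := ℝ) M (WithLp.toLp 2 y))| := by
        rw [inner_toEuclideanCLM]
    _ ≤ ‖WithLp.toLp 2 x‖ * ‖toEuclideanCLM (𝕜 := ℝ) M (WithLp.toLp 2 y)‖ :=
        abs_real_inner_le_norm _ _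
    _ ≤ ‖WithLp.toLp 2 x‖ * (opNorm M * ‖WithLp.toLp 2 y‖) := by
        rw [hM]; gcongr; exact ContinuousLinearMap.le_opNorm _ _
    _ = opNorm M * ‖WithLp.toLp 2 x‖ * ‖WithLp.toLp 2 y‖ := by ring

lemma abs_apply_le_opNorm (M : Matrix ι ι ℝ) (i j : ι) : |M i j| ≤ opNorm M := by
  simpa [PiLp.toLp_single, PiLp.norm_single] using
    abs_dotProduct_mulVec_le M (Pi.single i 1) (Pi.single j 1)

end OperatorNorm

section Quadratic

variable {ι : Type} [Fintype ι]

lemma norm_toLp_sq_eq_dotProduct (z : ι → ℝ) :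
    ‖WithLp.toLp 2 z‖ ^ 2 = z ⬝ᵥ z := by
  rw [EuclideanSpace.real_norm_sq_eq]
  simp [dotProduct, sq]

lemma dotProduct_vecMulVec_self_mulVec (a z : ι → ℝ) :
    z ⬝ᵥ vecMulVec a a *ᵥ z = (a ⬝ᵥ z) ^ 2 := by
  rw [vecMulVec_mulVec]
  simp [dotProduct_comm z a, sq]

lemma dotProduct_matIntegral_mulVec {T : ℝ} {f : ℝ → Matrix ι ι ℝ}
    (hf : ∀ i j, IntegrableOn (fun t => f t i j) (Ioc 0 T)) (z : ι → ℝ) :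
    z ⬝ᵥ matIntegral T f *ᵥ z = ∫ t in Ioc 0 T, z ⬝ᵥ f t *ᵥ z := by
  simp only [dotProduct, mulVec, matIntegral, of_apply, Finset.mul_sum]
  rw [integral_finsetSum _ fun i _ => integrable_finsetSum _ fun j _ =>
    ((hf i j).mul_const _).const_mul _]
  refine Finset.sum_congr rfl fun i _ => ?_
  rw [integral_finsetSum _ fun j _ => ((hf i j).mul_const _).const_mul _]
  simp only [integral_const_mul, integral_mul_const]

lemma dotProduct_sampledGram_mulVec (δ : ℝ) (N : ℕ) (v : ℝ → ι → ℝ) (z : ι → ℝ) :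
    z ⬝ᵥ sampledGram δ N v *ᵥ z = δ * ∑ k ∈ Finset.range N, (v (k * δ) ⬝ᵥ z) ^ 2 := by
  simp [sampledGram, smul_mulVec, sum_mulVec, dotProduct_sum,
    dotProduct_vecMulVec_self_mulVec]

end Quadratic

namespace SqLipschitz

variable {ι : Type} [Fintype ι] [DecidableEq ι] {T L : ℝ} {v : ℝ → ι → ℝ}

lemma lipschitzOnWith_mul_apply (hv : SqLipschitz T L v) (i j : ι) :
    LipschitzOnWith L.toNNReal (fun t => v t i * v t j) (Icc 0 T) := by
  refine LipschitzOnWith.of_dist_le_mul fun t ht s hs => ?_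
  calc dist (v t i * v t j) (v s i * v s j)
      ≤ opNorm (vecMulVec (v t) (v t) - vecMulVec (v s) (v s)) := by
        simpa [Real.dist_eq, vecMulVec_apply] using
          abs_apply_le_opNorm (vecMulVec (v t) (v t) - vecMulVec (v s) (v s)) i j
    _ ≤ L * |t - s| := hv t ht s hs
    _ ≤ L.toNNReal * dist t s := by
        rw [Real.dist_eq]; gcongr; exact Real.le_coe_toNNReal L

lemma lipschitzOnWith_sq_dotProduct (hv : SqLipschitz T L v) (z : ι → ℝ) :
    LipschitzOnWith (L.toNNReal * ‖WithLp.toLp 2 z‖₊ ^ 2) (fun t => (v t ⬝ᵥ z) ^ 2)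
      (Icc 0 T) := by
  refine LipschitzOnWith.of_dist_le_mul fun t ht s hs => ?_
  calc dist ((v t ⬝ᵥ z) ^ 2) ((v s ⬝ᵥ z) ^ 2)
      = |z ⬝ᵥ (vecMulVec (v t) (v t) - vecMulVec (v s) (v s)) *ᵥ z| := by
        rw [sub_mulVec, dotProduct_sub, dotProduct_vecMulVec_self_mulVec,
          dotProduct_vecMulVec_self_mulVec, Real.dist_eq]
    _ ≤ opNorm (vecMulVec (v t) (v t) - vecMulVec (v s) (v s)) * ‖WithLp.toLp 2 z‖ ^ 2 := by
        simpa [sq, mul_assoc] using abs_dotProduct_mulVec_le _ z z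
    _ ≤ L.toNNReal * |t - s| * ‖WithLp.toLp 2 z‖ ^ 2 := by
        gcongr; exact (hv t ht s hs).trans (by gcongr; exact Real.le_coe_toNNReal L)
    _ = _ := by push_cast; rw [Real.dist_eq]; ring

lemma integrableOn_mul_apply (hv : SqLipschitz T L v) (i j : ι) :
    IntegrableOn (fun t => v t i * v t j) (Ioc 0 T) :=
  ((hv.lipschitzOnWith_mul_apply i j).continuousOn.integrableOn_compact isCompact_Icc).mono_set
    Ioc_subset_Icc_self

end SqLipschitz

section RiemannSum

variable {g : ℝ → ℝ} {K : ℝ≥0} {δ : ℝ}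

lemma integral_le_mul_add_of_lipschitzOnWith {a : ℝ} (hδ : 0 ≤ δ)
    (hg : LipschitzOnWith K g (Icc a (a + δ))) :
    ∫ t in a..a + δ, g t ≤ δ * g a + K * δ ^ 2 / 2 := by
  have hle : a ≤ a + δ := by linarith
  have hbound : ∀ t ∈ Icc a (a + δ), g t ≤ g a + K * (t - a) := fun t ht => by
    have h := hg.dist_le_mul t ht a (left_mem_Icc.mpr hle)
    rw [Real.dist_eq, Real.dist_eq, abs_of_nonneg (sub_nonneg.mpr ht.1)] at h
    linarith [le_abs_self (g t - g a)]
  calc ∫ t in a..a + δ, g t ≤ ∫ t in a..a + δ, (g a + K * (t - a)) :=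
        intervalIntegral.integral_mono_on hle
          (hg.continuousOn.intervalIntegrable_of_Icc hle)
          ((by fun_prop : Continuous fun t => g a + K * (t - a)).intervalIntegrable _ _) hbound
    _ = δ * g a + K * δ ^ 2 / 2 := by
        rw [intervalIntegral.integral_add intervalIntegrable_const
          ((by fun_prop : Continuous fun t => K * (t - a)).intervalIntegrable _ _)]
        simp
        ring

lemma integral_le_leftRiemannSum_add_of_lipschitzOnWith (hδ : 0 ≤ δ) (N : ℕ)
    (hg : LipschitzOnWith K g (Icc 0 (N * δ))) :
    ∫ t in 0..N * δ, g t ≤ δ * ∑ k ∈ Finset.range N, g (k * δ) + N * (K * δ ^ 2 / 2) := by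
  induction N with
  | zero => simp
  | succ N ih =>
    have hsplit : ((N + 1 : ℕ) : ℝ) * δ = N * δ + δ := by push_cast; ring
    have hNδ : 0 ≤ (N : ℝ) * δ := by positivity
    rw [hsplit] at hg ⊢
    have hleft : LipschitzOnWith K g (Icc 0 (N * δ)) :=
      hg.mono (Icc_subset_Icc_right (by linarith))
    have hright : LipschitzOnWith K g (Icc (N * δ) (N * δ + δ)) :=
      hg.mono (Icc_subset_Icc_left hNδ)
    rw [← intervalIntegral.integral_add_adjacent_intervals
      (hleft.continuousOn.intervalIntegrable_of_Icc hNδ)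
      (hright.continuousOn.intervalIntegrable_of_Icc (by linarith)),
      Finset.sum_range_succ]
    have := integral_le_mul_add_of_lipschitzOnWith hδ hright
    push_cast
    linarith [ih hleft]

end RiemannSum

theorem SqLipschitz.matIntegral_loewnerLE_sampledGram_add {ι : Type} [Fintype ι] [DecidableEq ι]
    {T L δ : ℝ} {N : ℕ} {v : ℝ → ι → ℝ} (hv : SqLipschitz T L v) (hL : 0 ≤ L) (hδ : 0 ≤ δ)
    (hTN : T = N * δ) :
    loewnerLE (matIntegral T fun t => vecMulVec (v t) (v t))
      (sampledGram δ N v + (δ * T * L / 2) • (1 : Matrix ι ι ℝ)) := by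
  subst hTN
  have hherm : (sampledGram δ N v + (δ * (N * δ) * L / 2) • (1 : Matrix ι ι ℝ) -
      matIntegral (N * δ) fun t => vecMulVec (v t) (v t)).IsHermitian := by
    ext i j
    simp [sampledGram, matIntegral, Matrix.sum_apply, vecMulVec_apply, one_apply, eq_comm,
      mul_comm]
  refine PosSemidef.of_dotProduct_mulVec_nonneg hherm fun z => ?_
  have hriemann := integral_le_leftRiemannSum_add_of_lipschitzOnWith hδ N
    (hv.lipschitzOnWith_sq_dotProduct z)
  rw [star_trivial, sub_mulVec, add_mulVec, dotProduct_sub, dotProduct_add,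
    dotProduct_sampledGram_mulVec, smul_mulVec, one_mulVec, dotProduct_smul,
    dotProduct_matIntegral_mulVec (f := fun t => vecMulVec (v t) (v t))
      hv.integrableOn_mul_apply,
    ← intervalIntegral.integral_of_le (by positivity)]
  simp only [dotProduct_vecMulVec_self_mulVec, smul_eq_mul]
  push_cast at hriemann
  rw [Real.coe_toNNReal L hL, norm_toLp_sq_eq_dotProduct] at hriemann
  linarith

theorem stmt8_general
    {n m : ℕ} (T : ℝ)
    (x xdot : ℝ → Fin n → ℝ) (u : ℝ → Fin m → ℝ)
    (Q : Matrix (Fin n) (Fin n) ℝ)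
    (δ : ℝ) (hδ : 0 < δ) (N : ℕ) (hTN : T = N * δ)
    :
    ∀ L : ℝ, 0 ≤ L →
      SigmaDisc δ N xdot x u Q ∩ Mset T L xdot x u ⊆
        SigmaCont T xdot x u (Q + (δ * T * L / 2) • (1 : Matrix (Fin n) (Fin n) ℝ)) := by
  rintro L hL ⟨A, B⟩ ⟨hdisc, hlip⟩
  have hsampling := SqLipschitz.matIntegral_loewnerLE_sampledGram_add hlip hL hδ.le hTN
  change (Q + _ - _).PosSemidef
  convert PosSemidef.add hdisc hsampling using 1
  abel

theorem stmt8
    {n m : ℕ} (T : ℝ) (hT : 0 < T)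
    (x xdot : ℝ → Fin n → ℝ) (u : ℝ → Fin m → ℝ)
    (Q : Matrix (Fin n) (Fin n) ℝ) (hQ : Q.PosSemidef)
    (hxdotL2 : MeasureTheory.MemLp xdot 2 (MeasureTheory.volume.restrict (Set.Icc (0:ℝ) T)))
    (huL2 : MeasureTheory.MemLp u 2 (MeasureTheory.volume.restrict (Set.Icc (0:ℝ) T)))
    (hAC : ∀ t ∈ Set.Icc (0:ℝ) T, ∀ i, x t i = x 0 i + ∫ s in (0:ℝ)..t, xdot s i)
    (As : Matrix (Fin n) (Fin n) ℝ) (Bs : Matrix (Fin n) (Fin m) ℝ)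
    (htrue : (As, Bs) ∈ SigmaCont T xdot x u Q)
    (δ : ℝ) (hδ : 0 < δ) (N : ℕ) (hN : 0 < N) (hTN : T = N * δ)
    :
    ∀ L : ℝ, 0 ≤ L →
      SigmaDisc δ N xdot x u Q ∩ Mset T L xdot x u ⊆
        SigmaCont T xdot x u (Q + (δ * T * L / 2) • (1 : Matrix (Fin n) (Fin n) ℝ)) :=
  stmt8_general T x xdot u Q δ hδ N hTN
end

section
/- Suppose the data (x,u) satisfy the standing data assumptions and let λ ≥ 1 be such that A·A^T + B·B^T < (λ−1)·I_n (strict Loewner inequality) for every (A,B) ∈ Σ(Q). If the stacked signal ξ(t) := (ẋ(t); −x(t); −u(t)) ∈ ℝ^{2n+m} satisfies V_0^T(ξ) ≤ (1/2)LT for some L ≥ 0, then for every (A,B) ∈ Σ(Q) one has V_0^T(ẋ − Ax − Bu) ≤ (1/2)λLT; that is, Σ(Q) ⊆ N^{λL}_{x,u}. -/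
open MeasureTheory Matrix

/-! The noise of a candidate system is a fixed linear image of the stacked signal:
`ẋ − Ax − Bu = G ξ` with `G = [I | A | B]`. Hence every increment
`w(t)w(t)ᵀ − w(s)w(s)ᵀ = G (ξ(t)ξ(t)ᵀ − ξ(s)ξ(s)ᵀ) Gᵀ` has operator norm at most `‖G‖²` times
the corresponding increment of `ξ`, and `‖G‖² = ‖GGᵀ‖ = ‖I + AAᵀ + BBᵀ‖ ≤ λ` on `Σ(Q)`. -/

open scoped Matrix.Norms.L2Operator

namespace Matrix

theorem vecMulVec_mulVec_mulVec {ι κ R : Type} [Fintype κ] [CommSemiring R] (M : Matrix ι κ R)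
    (v w : κ → R) :
    vecMulVec (M *ᵥ v) (M *ᵥ w) = M * vecMulVec v w * Mᵀ := by
  rw [mul_vecMulVec, vecMulVec_mul, vecMul_transpose]

variable {ι κ : Type} [Fintype ι] [Fintype κ]

theorem sq_l2_opNorm_transpose_le_of_posSemidef [DecidableEq ι] {M : Matrix ι κ ℝ} {c : ℝ}
    (hc : 0 ≤ c) (h : (c • (1 : Matrix ι ι ℝ) - M * Mᵀ).PosSemidef) : ‖Mᵀ‖ ^ 2 ≤ c := by
  have hquad : ∀ w : EuclideanSpace ℝ ι,
      ‖(EuclideanSpace.equiv κ ℝ).symm (Mᵀ *ᵥ w)‖ ^ 2 ≤ c * ‖w‖ ^ 2 := by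
    intro w
    have hw := h.dotProduct_mulVec_nonneg w
    have hMMt : w.ofLp ⬝ᵥ (M * Mᵀ) *ᵥ w.ofLp = (Mᵀ *ᵥ w.ofLp) ⬝ᵥ (Mᵀ *ᵥ w.ofLp) := by
      rw [← mulVec_mulVec, dotProduct_mulVec, ← mulVec_transpose]
    simp only [star_trivial, sub_mulVec, smul_mulVec, one_mulVec, dotProduct_sub,
      dotProduct_smul, smul_eq_mul, hMMt] at hw
    rw [← real_inner_self_eq_norm_sq, ← real_inner_self_eq_norm_sq]
    simp only [EuclideanSpace.inner_eq_star_dotProduct, star_trivial]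
    exact sub_nonneg.mp hw
  have hbound : ‖Mᵀ‖ ≤ √c := by
    rw [l2_opNorm_def]
    refine ContinuousLinearMap.opNorm_le_bound _ (Real.sqrt_nonneg c) fun w => ?_
    rw [← pow_le_pow_iff_left₀ (norm_nonneg _) (by positivity) two_ne_zero, mul_pow,
      Real.sq_sqrt hc]
    exact hquad w
  calc ‖Mᵀ‖ ^ 2 ≤ √c ^ 2 := pow_le_pow_left₀ (norm_nonneg _) hbound 2
    _ = c := Real.sq_sqrt hc

theorem opNorm_vecMulVec_mulVec_sub_le [DecidableEq ι] [DecidableEq κ] (M : Matrix ι κ ℝ)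
    (v w : κ → ℝ) :
    opNorm (vecMulVec (M *ᵥ v) (M *ᵥ v) - vecMulVec (M *ᵥ w) (M *ᵥ w)) ≤
      ‖Mᵀ‖ ^ 2 * opNorm (vecMulVec v v - vecMulVec w w) := by
  rw [vecMulVec_mulVec_mulVec, vecMulVec_mulVec_mulVec, ← Matrix.sub_mul, ← Matrix.mul_sub]
  set X := vecMulVec v v - vecMulVec w w
  have hM : ‖M‖ = ‖Mᵀ‖ := by
    rw [← conjTranspose_eq_transpose_of_trivial, l2_opNorm_conjTranspose]
  calc ‖M * X * Mᵀ‖ ≤ ‖M‖ * ‖X‖ * ‖Mᵀ‖ :=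
        (l2_opNorm_mul _ _).trans (mul_le_mul_of_nonneg_right (l2_opNorm_mul _ _) (norm_nonneg _))
    _ = ‖Mᵀ‖ ^ 2 * ‖X‖ := by rw [hM]; ring

end Matrix

theorem TotalSqVarLE.mulVec {ι κ : Type} [Fintype ι] [Fintype κ] [DecidableEq ι]
    [DecidableEq κ] {T C c : ℝ} {v : ℝ → κ → ℝ} (hv : TotalSqVarLE T v C)
    {M : Matrix ι κ ℝ} (hM : ‖Mᵀ‖ ^ 2 ≤ c) :
    TotalSqVarLE T (fun t => M *ᵥ v t) (c * C) := by
  rintro s ⟨N, t, hmono, h0, hT, rfl⟩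
  have hc : 0 ≤ c := (sq_nonneg _).trans hM
  calc _ ≤ ∑ i : Fin N, c * opNorm (vecMulVec (v (t i.succ)) (v (t i.succ)) -
          vecMulVec (v (t i.castSucc)) (v (t i.castSucc))) :=
        Finset.sum_le_sum fun i _ => (opNorm_vecMulVec_mulVec_sub_le M _ _).trans
          (mul_le_mul_of_nonneg_right hM (norm_nonneg _))
    _ ≤ c * C := by
      rw [← Finset.mul_sum]
      exact mul_le_mul_of_nonneg_left (hv _ ⟨N, t, hmono, h0, hT, rfl⟩) hc

section System

variable {n m : ℕ}

def noiseGain (A : Matrix (Fin n) (Fin n) ℝ) (B : Matrix (Fin n) (Fin m) ℝ) :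
    Matrix (Fin n) (Fin n ⊕ (Fin n ⊕ Fin m)) ℝ :=
  fromCols 1 (fromCols A B)

theorem noiseSig_eq_noiseGain_mulVec (xdot x : ℝ → Fin n → ℝ) (u : ℝ → Fin m → ℝ)
    (A : Matrix (Fin n) (Fin n) ℝ) (B : Matrix (Fin n) (Fin m) ℝ) :
    noiseSig xdot x u A B = fun t => noiseGain A B *ᵥ xiSig xdot x u t := by
  funext t
  change _ = fromCols 1 (fromCols A B) *ᵥ Sum.elim (xdot t) (Sum.elim (-x t) (-u t))
  rw [fromCols_mulVec_sumElim, fromCols_mulVec_sumElim, one_mulVec, mulVec_neg, mulVec_neg,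
    noiseSig]
  abel

theorem noiseGain_mul_transpose (A : Matrix (Fin n) (Fin n) ℝ) (B : Matrix (Fin n) (Fin m) ℝ) :
    noiseGain A B * (noiseGain A B)ᵀ = 1 + (A * Aᵀ + B * Bᵀ) := by
  rw [noiseGain, transpose_fromCols, transpose_fromCols, fromCols_mul_fromRows,
    fromCols_mul_fromRows, transpose_one, Matrix.one_mul]

end System

theorem stmt14_general
    {n m : ℕ} (T : ℝ)
    (x xdot : ℝ → Fin n → ℝ) (u : ℝ → Fin m → ℝ)
    (Q : Matrix (Fin n) (Fin n) ℝ)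
    (lam : ℝ) (hlam : 1 ≤ lam)
    (hbd : ∀ AB ∈ SigmaCont T xdot x u Q,
      loewnerLT (AB.1 * AB.1.transpose + AB.2 * AB.2.transpose)
        ((lam - 1) • (1 : Matrix (Fin n) (Fin n) ℝ)))
    (L : ℝ)
    (hxi : TotalSqVarLE T (xiSig xdot x u) (L * T / 2)) :
    SigmaCont T xdot x u Q ⊆ Nset T (lam * L) xdot x u := by
  intro AB hAB
  have hgain : ‖(noiseGain AB.1 AB.2)ᵀ‖ ^ 2 ≤ lam := by
    refine sq_l2_opNorm_transpose_le_of_posSemidef (by linarith) ?_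
    have hgram : lam • (1 : Matrix (Fin n) (Fin n) ℝ) -
        noiseGain AB.1 AB.2 * (noiseGain AB.1 AB.2)ᵀ =
          (lam - 1) • 1 - (AB.1 * AB.1ᵀ + AB.2 * AB.2ᵀ) := by
      rw [noiseGain_mul_transpose, sub_smul, one_smul]
      abel
    exact hgram ▸ (hbd AB hAB).posSemidef
  have hnoise := hxi.mulVec hgain
  rwa [← noiseSig_eq_noiseGain_mulVec, ← mul_div_assoc, ← mul_assoc] at hnoise

theorem stmt14
    {n m : ℕ} (T : ℝ) (hT : 0 < T)
    (x xdot : ℝ → Fin n → ℝ) (u : ℝ → Fin m → ℝ)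
    (Q : Matrix (Fin n) (Fin n) ℝ) (hQ : Q.PosSemidef)
    (hxdotL2 : MeasureTheory.MemLp xdot 2 (MeasureTheory.volume.restrict (Set.Icc (0:ℝ) T)))
    (huL2 : MeasureTheory.MemLp u 2 (MeasureTheory.volume.restrict (Set.Icc (0:ℝ) T)))
    (hAC : ∀ t ∈ Set.Icc (0:ℝ) T, ∀ i, x t i = x 0 i + ∫ s in (0:ℝ)..t, xdot s i)
    (As : Matrix (Fin n) (Fin n) ℝ) (Bs : Matrix (Fin n) (Fin m) ℝ)
    (htrue : (As, Bs) ∈ SigmaCont T xdot x u Q)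
    (lam : ℝ) (hlam : 1 ≤ lam)
    (hbd : ∀ AB ∈ SigmaCont T xdot x u Q,
      loewnerLT (AB.1 * AB.1.transpose + AB.2 * AB.2.transpose)
        ((lam - 1) • (1 : Matrix (Fin n) (Fin n) ℝ)))
    (L : ℝ) (hL : 0 ≤ L)
    (hxi : TotalSqVarLE T (xiSig xdot x u) (L * T / 2)) :
    SigmaCont T xdot x u Q ⊆ Nset T (lam * L) xdot x u :=
  stmt14_general T x xdot u Q lam hlam hbd L hxi
end
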